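/- If T is an invertible bounded linear operator on a complex Hilbert space, then w(T) > ‖T‖/2. Consequently, if w(T) = ‖T‖/2 then T is not invertible. -/

import Mathlib

variable {H : Type*} [NormedAddCommGroup H] [InnerProductSpace ℂ H] [CompleteSpace H]

/-- The numerical radius of a bounded linear operator. -/
noncomputable def numRad (T : H →L[ℂ] H) : ℝ :=
  sSup {r : ℝ | ∃ x : H, ‖x‖ = 1 ∧ r = ‖(inner ℂ (T x) x : ℂ)‖}

/-- The α-norm of a bounded linear operator. -/
noncomputable def alphaNorm (α : ℝ) (T : H →L[ℂ] H) : ℝ :=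
  sSup {r : ℝ | ∃ x : H, ‖x‖ = 1 ∧
    r = Real.sqrt (α * (‖(inner ℂ (T x) x : ℂ)‖)^2 + (1 - α) * ‖T x‖^2)}

/-- `|T| = (T* T)^(1/2)`. -/
noncomputable def absOp (T : H →L[ℂ] H) : H →L[ℂ] H :=
  CFC.sqrt (ContinuousLinearMap.adjoint T * T)

/-- `|T*| = (T T*)^(1/2)`. -/
noncomputable def absAdj (T : H →L[ℂ] H) : H →L[ℂ] H :=
  CFC.sqrt (T * ContinuousLinearMap.adjoint T)

/-- The real part `(A + A*)/2`. -/
noncomputable def reOp (A : H →L[ℂ] H) : H →L[ℂ] H :=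
  (2:ℝ)⁻¹ • (A + ContinuousLinearMap.adjoint A)

/-- The imaginary part `(A - A*)/(2i)`. -/
noncomputable def imOp (A : H →L[ℂ] H) : H →L[ℂ] H :=
  ((2 * Complex.I)⁻¹ : ℂ) • (A - ContinuousLinearMap.adjoint A)

/-
Write `T = A + iB` with `A = ℜ T` and `B = ℑ T` self-adjoint. Their quadratic forms are `re` and
`-im` of `⟪T x, x⟫`, so `‖A‖, ‖B‖ ≤ w(T)`, and the parallelogram law gives
`‖T x‖² + ‖T* x‖² = 2 (‖A x‖² + ‖B x‖²) ≤ 4 w(T)²` for unit `x`. If `T` is invertible then so is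
`T*`, so `‖T* x‖ ≥ c > 0` on the unit sphere and `‖T‖² ≤ 4 w(T)² - c² < 4 w(T)²`.
-/

open ContinuousLinearMap ComplexStarModule

theorem ContinuousLinearMap.norm_sq_le_of_unit_norm {𝕜 E F : Type*} [RCLike 𝕜]
    [NormedAddCommGroup E] [NormedSpace 𝕜 E] [Nontrivial E] [NormedAddCommGroup F]
    [NormedSpace 𝕜 F] {f : E →L[𝕜] F} {C : ℝ} (h : ∀ x, ‖x‖ = 1 → ‖f x‖ ^ 2 ≤ C) :
    ‖f‖ ^ 2 ≤ C := by
  obtain ⟨e, he⟩ := exists_ne (0 : E)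
  have hC : 0 ≤ C := (sq_nonneg _).trans (h _ (norm_smul_inv_norm (𝕜 := 𝕜) he))
  have hf : ‖f‖ ≤ √C := opNorm_le_of_unit_norm (Real.sqrt_nonneg C) fun x hx ↦
    Real.le_sqrt_of_sq_le (h x hx)
  exact (Real.le_sqrt (norm_nonneg f) hC).1 hf

theorem ContinuousLinearMap.exists_pos_mul_norm_le_norm_apply {𝕜 E : Type*} [RCLike 𝕜]
    [NormedAddCommGroup E] [NormedSpace 𝕜 E] [Nontrivial E] {A : E →L[𝕜] E} (hA : IsUnit A) :
    ∃ c > 0, ∀ x, c * ‖x‖ ≤ ‖A x‖ := by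
  obtain ⟨u, rfl⟩ := hA
  have hinv : 0 < ‖(↑u⁻¹ : E →L[𝕜] E)‖ := norm_pos_iff.2 u⁻¹.ne_zero
  refine ⟨‖(↑u⁻¹ : E →L[𝕜] E)‖⁻¹, inv_pos.2 hinv, fun x ↦ ?_⟩
  rw [inv_mul_le_iff₀ hinv]
  calc ‖x‖ = ‖(↑u⁻¹ : E →L[𝕜] E) ((u : E →L[𝕜] E) x)‖ :=
        congrArg norm (DFunLike.congr_fun u.inv_mul x).symm
    _ ≤ _ := le_opNorm _ _

theorem ContinuousLinearMap.opNorm_le_of_isSymmetric_of_abs_re_inner_le {𝕜 E : Type*} [RCLike 𝕜]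
    [NormedAddCommGroup E] [InnerProductSpace 𝕜 E] {S : E →L[𝕜] E}
    (hS : (S : E →ₗ[𝕜] E).IsSymmetric) {c : ℝ} (hc : 0 ≤ c)
    (h : ∀ x, ‖x‖ = 1 → |RCLike.re (inner 𝕜 (S x) x)| ≤ c) : ‖S‖ ≤ c := by
  rw [S.norm_eq_iSup_rayleighQuotient hS]
  refine ciSup_le fun x ↦ ?_
  rcases eq_or_ne x 0 with rfl | hx
  · simpa using hc
  have hx' : (‖x‖⁻¹ : 𝕜) ≠ 0 := by simpa using hx
  have hu : ‖(‖x‖⁻¹ : 𝕜) • x‖ = 1 := norm_smul_inv_norm hx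
  rw [← S.rayleigh_smul x hx', rayleighQuotient, reApplyInnerSelf_apply, hu, one_pow, div_one]
  exact h _ hu

section numRad

variable {E : Type*} [NormedAddCommGroup E] [InnerProductSpace ℂ E]

theorem norm_inner_apply_self_le_numRad (T : E →L[ℂ] E) {x : E} (hx : ‖x‖ = 1) :
    ‖inner ℂ (T x) x‖ ≤ numRad T := by
  refine le_csSup ⟨‖T‖, ?_⟩ ⟨x, hx, rfl⟩
  rintro r ⟨y, hy, rfl⟩
  calc ‖inner ℂ (T y) y‖ ≤ ‖T y‖ * ‖y‖ := norm_inner_le_norm _ _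
    _ ≤ ‖T‖ := by simpa [hy] using T.le_opNorm y

theorem numRad_nonneg (T : E →L[ℂ] E) : 0 ≤ numRad T :=
  Real.sSup_nonneg fun _ ⟨_, _, hr⟩ ↦ hr ▸ norm_nonneg _

variable [CompleteSpace E] (T : E →L[ℂ] E)

theorem re_inner_realPart_apply (x : E) :
    (inner ℂ ((ℜ T : E →L[ℂ] E) x) x).re = (inner ℂ (T x) x).re := by
  simp [realPart_apply_coe, star_eq_adjoint, adjoint_inner_left]
  rw [← inner_conj_symm x, Complex.conj_re]
  ring

theorem re_inner_imaginaryPart_apply (x : E) :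
    (inner ℂ ((ℑ T : E →L[ℂ] E) x) x).re = -(inner ℂ (T x) x).im := by
  simp [imaginaryPart_apply_coe, star_eq_adjoint, ← Complex.coe_smul, inner_smul_left,
    inner_sub_left, adjoint_inner_left]
  rw [← inner_conj_symm x, Complex.conj_im]
  ring

theorem norm_realPart_le_numRad : ‖(ℜ T : E →L[ℂ] E)‖ ≤ numRad T :=
  opNorm_le_of_isSymmetric_of_abs_re_inner_le (ℜ T).2.isSymmetric (numRad_nonneg T) fun x hx ↦ by
    rw [RCLike.re_to_complex, re_inner_realPart_apply]
    exact (Complex.abs_re_le_norm _).trans (norm_inner_apply_self_le_numRad T hx)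

theorem norm_imaginaryPart_le_numRad : ‖(ℑ T : E →L[ℂ] E)‖ ≤ numRad T :=
  opNorm_le_of_isSymmetric_of_abs_re_inner_le (ℑ T).2.isSymmetric (numRad_nonneg T) fun x hx ↦ by
    rw [RCLike.re_to_complex, re_inner_imaginaryPart_apply, abs_neg]
    exact (Complex.abs_im_le_norm _).trans (norm_inner_apply_self_le_numRad T hx)

theorem norm_sq_apply_add_norm_sq_adjoint_apply (x : E) :
    ‖T x‖ ^ 2 + ‖adjoint T x‖ ^ 2 =
      2 * (‖(ℜ T : E →L[ℂ] E) x‖ ^ 2 + ‖(ℑ T : E →L[ℂ] E) x‖ ^ 2) := by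
  set A : E →L[ℂ] E := ↑(ℜ T)
  set B : E →L[ℂ] E := ↑(ℑ T)
  have hT : T = A + Complex.I • B := (realPart_add_I_smul_imaginaryPart T).symm
  have hT' : adjoint T = A - Complex.I • B := by
    rw [← star_eq_adjoint, hT]
    simp [star_smul, (ℜ T).2.star_eq, (ℑ T).2.star_eq, A, B, sub_eq_add_neg]
  rw [hT', hT, add_apply, sub_apply, smul_apply, parallelogram_law_with_norm ℂ, norm_smul,
    Complex.norm_I, one_mul]

theorem norm_sq_apply_add_norm_sq_adjoint_apply_le {x : E} (hx : ‖x‖ = 1) :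
    ‖T x‖ ^ 2 + ‖adjoint T x‖ ^ 2 ≤ 4 * numRad T ^ 2 := by
  have hre := (ℜ T : E →L[ℂ] E).le_of_opNorm_le (norm_realPart_le_numRad T) x
  have him := (ℑ T : E →L[ℂ] E).le_of_opNorm_le (norm_imaginaryPart_le_numRad T) x
  rw [hx, mul_one] at hre him
  rw [norm_sq_apply_add_norm_sq_adjoint_apply]
  nlinarith [norm_nonneg ((ℜ T : E →L[ℂ] E) x), norm_nonneg ((ℑ T : E →L[ℂ] E) x)]

end numRad

theorem numRad_gt_half_norm_of_invertible [Nontrivial H] (T : H →L[ℂ] H) :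
    (IsUnit T → numRad T > ‖T‖ / 2) ∧ (numRad T = ‖T‖ / 2 → ¬ IsUnit T) := by
  have key : IsUnit T → ‖T‖ / 2 < numRad T := by
    intro hT
    obtain ⟨c, hc, hcT⟩ := exists_pos_mul_norm_le_norm_apply (star_eq_adjoint T ▸ hT.star)
    have hTc : ‖T‖ ^ 2 ≤ 4 * numRad T ^ 2 - c ^ 2 := norm_sq_le_of_unit_norm fun x hx ↦ by
      have hc_le := hcT x
      rw [hx, mul_one] at hc_le
      nlinarith [norm_sq_apply_add_norm_sq_adjoint_apply_le T hx]
    nlinarith [numRad_nonneg T, norm_nonneg T]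
  exact ⟨key, fun h hT ↦ (key hT).ne' h⟩
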